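/- arXiv:1907.00615 — 3 statements merged into one kernel-verified Lean document; each statement's English description precedes it below -/
import Mathlib

section
/- Let K be a compact convex semigroup and let e ∈ K be a minimal idempotent. Then for every a in the closed left ideal I = K·e = {b·e : b ∈ K} and every x ∈ K, one has a·x·e = a. -/
/-!
Put `u = x·e`. Right translation by `u` is a continuous affine self-map of the compact convex left
ideal `K·e`, so the Cesàro means of an orbit accumulate at a fixed point `w = w·u` with `w·e = w`.
The closed subsemigroup `{c | c·e = c ∧ c·u = c}` is therefore nonempty and, by Ellis' lemma,
contains an idempotent `m`. Then `e·m` is an idempotent below `e`, so `e·m = e` by minimality, and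
`e·u = e·m·u = e·m = e`; hence `(b·e)·x·e = b·(e·u) = b·e`.
-/

open Set Filter Topology

section CesaroMean

variable {E : Type*} [AddCommGroup E] [Module ℝ E] {S : Set E} {T : E → E} {x : E}

def AffineOn (S : Set E) (T : E → E) : Prop :=
  ∀ t ∈ Icc (0 : ℝ) 1, ∀ a ∈ S, ∀ a' ∈ S, T (t • a + (1 - t) • a') = t • T a + (1 - t) • T a'

lemma AffineOn.mono {S' : Set E} (hT : AffineOn S T) (hS' : S' ⊆ S) : AffineOn S' T :=
  fun t ht a ha a' ha' ↦ hT t ht a (hS' ha) a' (hS' ha')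

lemma Convex.image_of_affineOn (hS : Convex ℝ S) (hT : AffineOn S T) : Convex ℝ (T '' S) := by
  rintro _ ⟨a, ha, rfl⟩ _ ⟨a', ha', rfl⟩ s t hs ht hst
  obtain rfl : t = 1 - s := by linarith
  exact ⟨_, hS ha ha' hs ht hst, hT s ⟨hs, by linarith⟩ a ha a' ha'⟩

-- The Cesàro mean `(n + 1)⁻¹ • ∑ k ∈ Finset.range (n + 1), T^[k] x`, built up one term at a time
-- so that only two-point affinity of `T` is ever needed.
noncomputable def cesaroMean (T : E → E) (x : E) : ℕ → E
  | 0 => x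
  | n + 1 => ((n + 1 : ℝ) / (n + 2)) • cesaroMean T x n + (1 - (n + 1 : ℝ) / (n + 2)) • T^[n + 1] x

lemma cesaroMean_succ_weight_mem_Icc (n : ℕ) : ((n + 1 : ℝ) / (n + 2)) ∈ Icc (0 : ℝ) 1 :=
  ⟨by positivity, (div_le_one (by positivity)).2 (by linarith)⟩

lemma cesaroMean_mem (hS : Convex ℝ S) (hT : MapsTo T S S) (hx : x ∈ S) (n : ℕ) :
    cesaroMean T x n ∈ S := by
  induction n with
  | zero => exact hx
  | succ n ih =>
    obtain ⟨h0, h1⟩ := cesaroMean_succ_weight_mem_Icc n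
    exact hS ih (hT.iterate _ hx) h0 (sub_nonneg.2 h1) (add_sub_cancel _ _)

lemma map_cesaroMean (hS : Convex ℝ S) (hT : MapsTo T S S) (haff : AffineOn S T) (hx : x ∈ S)
    (n : ℕ) :
    T (cesaroMean T x n) = cesaroMean T x n + ((n : ℝ) + 1)⁻¹ • (T^[n + 1] x - x) := by
  induction n with
  | zero => simp [cesaroMean]
  | succ n ih =>
    rw [cesaroMean, haff _ (cesaroMean_succ_weight_mem_Icc n) _ (cesaroMean_mem hS hT hx n) _
      (hT.iterate _ hx), ih, ← Function.iterate_succ_apply' T]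
    have h1 : ((n : ℝ) + 1) ≠ 0 := by positivity
    have h2 : ((n : ℝ) + 2) ≠ 0 := by positivity
    push_cast
    match_scalars <;> field_simp <;> ring

end CesaroMean

section FixedPoint

variable {E : Type*} [AddCommGroup E] [Module ℝ E] [TopologicalSpace E] [IsTopologicalAddGroup E]
  [ContinuousSMul ℝ E] {S : Set E} {T : E → E} {x : E}

lemma tendsto_map_cesaroMean_sub (hSc : IsCompact S) (hS : Convex ℝ S) (hT : MapsTo T S S)
    (haff : AffineOn S T) (hx : x ∈ S) :
    Tendsto (fun n ↦ T (cesaroMean T x n) - cesaroMean T x n) atTop (𝓝 0) := by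
  have hbdd : Bornology.IsVonNBounded ℝ ((· - x) '' S) :=
    (hSc.image (continuous_sub_right x)).isVonNBounded ℝ
  have hinv : Tendsto (fun n : ℕ ↦ ((n : ℝ) + 1)⁻¹) atTop (𝓝 0) :=
    tendsto_inv_atTop_zero.comp (tendsto_atTop_add_const_right _ 1 tendsto_natCast_atTop_atTop)
  refine (hbdd.smul_tendsto_zero (.of_forall fun n ↦ mem_image_of_mem _ (hT.iterate (n + 1) hx))
    hinv).congr fun n ↦ ?_
  rw [map_cesaroMean hS hT haff hx, add_sub_cancel_left]
  rfl

theorem exists_fixedPoint_of_affine [T2Space E] (hSc : IsCompact S) (hS : Convex ℝ S)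
    (hne : S.Nonempty) (hT : MapsTo T S S) (hTc : ContinuousOn T S) (haff : AffineOn S T) :
    ∃ w ∈ S, T w = w := by
  obtain ⟨x, hx⟩ := hne
  have hmeanS : map (cesaroMean T x) atTop ≤ 𝓟 S :=
    le_principal_iff.2 (eventually_map.2 (.of_forall (cesaroMean_mem hS hT hx)))
  obtain ⟨w, hwS, hw⟩ := hSc hmeanS
  have hdefect : Tendsto (fun y ↦ T y - y) (𝓝 w ⊓ map (cesaroMean T x) atTop) (𝓝 (T w - w)) :=
    ((hTc.sub continuousOn_id) w hwS).mono_left (inf_le_inf_left _ hmeanS)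
  refine ⟨w, hwS, sub_eq_zero.1 (eq_of_nhds_neBot ?_)⟩
  exact (MapClusterPt.tendsto_comp' hdefect hw).clusterPt.mono
    (tendsto_map_cesaroMean_sub hSc hS hT haff hx)

end FixedPoint

theorem mul_eq_self_of_minimal_idempotent {M : Type*} [Semigroup M] [TopologicalSpace M]
    [T2Space M] [CompactSpace M] (hcont : ∀ r : M, Continuous (· * r)) {e u w : M}
    (he : e * e = e) (hmin : ∀ f, f * f = f → f * e = f → e * f = f → f = e)
    (hwe : w * e = w) (hwu : w * u = w) : e * u = e := by
  obtain ⟨m, ⟨hme, hmu⟩, hmm⟩ := exists_idempotent_in_compact_subsemigroup hcont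
    {c | c * e = c ∧ c * u = c} ⟨w, hwe, hwu⟩
    ((isClosed_eq (hcont e) continuous_id).inter (isClosed_eq (hcont u) continuous_id)).isCompact
    fun p ⟨_, _⟩ q ⟨hqe, hqu⟩ ↦ ⟨by rw [mul_assoc, hqe], by rw [mul_assoc, hqu]⟩
  have hem : e * m = e := hmin _ (by rw [mul_assoc, ← mul_assoc m, hme, hmm])
    (by rw [mul_assoc, hme]) (by rw [← mul_assoc, he])
  rw [← hem, mul_assoc, hmu]

abbrev Set.semigroupOfMulMem {X : Type*} (K : Set X) (mul : X → X → X)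
    (hmem : ∀ a ∈ K, ∀ b ∈ K, mul a b ∈ K)
    (hassoc : ∀ a ∈ K, ∀ b ∈ K, ∀ c ∈ K, mul (mul a b) c = mul a (mul b c)) : Semigroup K where
  mul p q := ⟨mul p q, hmem _ p.2 _ q.2⟩
  mul_assoc p q r := Subtype.ext (hassoc _ p.2 _ q.2 _ r.2)

theorem compact_convex_semigroup_left_ideal_absorbs_general
    {E : Type*} [AddCommGroup E] [Module ℝ E] [TopologicalSpace E]
    [IsTopologicalAddGroup E] [ContinuousSMul ℝ E] [T2Space E]
    (K : Set E) (hKcpt : IsCompact K) (hKconv : Convex ℝ K)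
    (mul : E → E → E)
    (hmem : ∀ a ∈ K, ∀ b ∈ K, mul a b ∈ K)
    (hassoc : ∀ a ∈ K, ∀ b ∈ K, ∀ c ∈ K, mul (mul a b) c = mul a (mul b c))
    (hcont : ∀ b ∈ K, ContinuousOn (fun a => mul a b) K)
    (haffine : ∀ t ∈ Set.Icc (0:ℝ) 1, ∀ a ∈ K, ∀ a' ∈ K, ∀ b ∈ K,
      mul (t • a + (1 - t) • a') b = t • mul a b + (1 - t) • mul a' b)
    (e : E) (heK : e ∈ K) (he : mul e e = e)
    (hmin : ∀ f ∈ K, mul f f = f → mul f e = f → mul e f = f → f = e) :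
    ∀ a, (∃ b ∈ K, mul b e = a) → ∀ x ∈ K, mul (mul a x) e = a := by
  rintro _ ⟨b, hbK, rfl⟩ x hxK
  have huK : mul x e ∈ K := hmem x hxK e heK
  have hideal : (mul · e) '' K ⊆ K := image_subset_iff.2 fun c hc ↦ hmem c hc e heK
  have haff : AffineOn K (mul · (mul x e)) := fun t ht a ha a' ha' ↦ haffine t ht a ha a' ha' _ huK
  obtain ⟨_, ⟨c, hcK, rfl⟩, hfix⟩ := exists_fixedPoint_of_affine
    (hKcpt.image_of_continuousOn (hcont e heK))
    (hKconv.image_of_affineOn fun t ht a ha a' ha' ↦ haffine t ht a ha a' ha' e heK)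
    ⟨e, e, heK, he⟩
    (fun d hd ↦ ⟨mul d x, hmem d (hideal hd) x hxK, hassoc d (hideal hd) x hxK e heK⟩)
    ((hcont _ huK).mono hideal) (haff.mono hideal)
  let := K.semigroupOfMulMem mul hmem hassoc
  have : CompactSpace K := isCompact_iff_compactSpace.mp hKcpt
  have heu : mul e (mul x e) = e := congrArg Subtype.val <|
    mul_eq_self_of_minimal_idempotent (M := K) (e := ⟨e, heK⟩) (u := ⟨_, huK⟩)
      (w := ⟨_, hmem c hcK e heK⟩)
      (fun r ↦ (hcont r r.2).domRestrict.subtype_mk _)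
      (Subtype.ext he) (fun f hff hfe hef ↦ Subtype.ext (hmin f f.2 (congrArg Subtype.val hff)
        (congrArg Subtype.val hfe) (congrArg Subtype.val hef)))
      (Subtype.ext ((hassoc c hcK e heK e heK).trans (congrArg (mul c) he))) (Subtype.ext hfix)
  rw [hassoc b hbK e heK x hxK, hassoc b hbK _ (hmem e heK x hxK) e heK,
    hassoc e heK x hxK e heK, heu]

/-- In a compact convex semigroup, if `e` is a minimal idempotent, then for every `a` in the
closed left ideal `I = K·e` and every `x ∈ K` one has `a·x·e = a`. -/
theorem compact_convex_semigroup_left_ideal_absorbs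
    {E : Type*} [AddCommGroup E] [Module ℝ E] [TopologicalSpace E]
    [IsTopologicalAddGroup E] [ContinuousSMul ℝ E] [T2Space E] [LocallyConvexSpace ℝ E]
    (K : Set E) (hKcpt : IsCompact K) (hKconv : Convex ℝ K) (hKne : K.Nonempty)
    (mul : E → E → E)
    (hmem : ∀ a ∈ K, ∀ b ∈ K, mul a b ∈ K)
    (hassoc : ∀ a ∈ K, ∀ b ∈ K, ∀ c ∈ K, mul (mul a b) c = mul a (mul b c))
    (hcont : ∀ b ∈ K, ContinuousOn (fun a => mul a b) K)
    (haffine : ∀ t ∈ Set.Icc (0:ℝ) 1, ∀ a ∈ K, ∀ a' ∈ K, ∀ b ∈ K,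
      mul (t • a + (1 - t) • a') b = t • mul a b + (1 - t) • mul a' b)
    (e : E) (heK : e ∈ K) (he : mul e e = e)
    (hmin : ∀ f ∈ K, mul f f = f → mul f e = f → mul e f = f → f = e) :
    ∀ a, (∃ b ∈ K, mul b e = a) → ∀ x ∈ K, mul (mul a x) e = a :=
  compact_convex_semigroup_left_ideal_absorbs_general K hKcpt hKconv mul hmem hassoc hcont haffine e
    heK he hmin
end

section
/- Let K be a compact convex semigroup, let e ∈ K be a minimal idempotent, and let x ∈ K. Then e·x is again a minimal idempotent of K. -/
/-!
Right translation `w ↦ w * s` is a continuous affine self-map of `K`, so by a Markov–Kakutani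
argument it has a fixed point; hence `{w | w * s = w}` is a nonempty compact subsemigroup and, by
Ellis–Numakura, contains an idempotent. For `s = e * a * e` minimality of `e` turns this idempotent
into the identity `e * a * e = e`, and from `e * x * e = e` it is pure semigroup algebra that
`e * x` is again a minimal idempotent.
-/

open Set Function

section FixedPoint

variable {E : Type*} [AddCommGroup E] [Module ℝ E] [TopologicalSpace E] {K : Set E} {f : E → E}

def IsInvariantCompactConvex (f : E → E) (N : Set E) : Prop :=
  N.Nonempty ∧ IsCompact N ∧ Convex ℝ N ∧ MapsTo f N N

theorem exists_minimal_isInvariantCompactConvex [T2Space E] (hKcpt : IsCompact K)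
    (hKconv : Convex ℝ K) (hKne : K.Nonempty) (hmaps : MapsTo f K K) :
    ∃ N ⊆ K, Minimal (IsInvariantCompactConvex f) N := by
  refine zorn_superset_nonempty _ (fun c hcS hchain hcne => ?_) K ⟨hKne, hKcpt, hKconv, hmaps⟩
  have : Nonempty c := hcne.coe_sort
  obtain ⟨N₀, hN₀⟩ := hcne
  refine ⟨⋂₀ c, ⟨?_, ?_, convex_sInter fun N hN => (hcS hN).2.2.1, ?_⟩,
    fun N hN => sInter_subset_of_mem hN⟩
  · rw [sInter_eq_iInter]
    exact IsCompact.nonempty_iInter_of_directed_nonempty_isCompact_isClosed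
      (fun N : c => (N : Set E))
      (DirectedOn.directed_val (IsChain.directedOn hchain.symm)) (fun N => (hcS N.2).1)
      (fun N => (hcS N.2).2.1) (fun N => (hcS N.2).2.1.isClosed)
  · exact (hcS hN₀).2.1.of_isClosed_subset (isClosed_sInter fun N hN => (hcS hN).2.1.isClosed)
      (sInter_subset_of_mem hN₀)
  · exact fun d hd => mem_sInter.2 fun N hN => (hcS hN).2.2.2 (mem_sInter.1 hd N hN)

variable [IsTopologicalAddGroup E] [ContinuousSMul ℝ E]

/-- The averaged map `d ↦ (d + f d) / 2` commutes with `f`, so its image of a minimal invariant set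
is again invariant. -/
theorem image_midpoint_eq_of_minimal {N : Set E} (hNK : N ⊆ K) (hfc : ContinuousOn f K)
    (haff : ∀ t ∈ Icc (0:ℝ) 1, ∀ a ∈ K, ∀ a' ∈ K,
      f (t • a + (1 - t) • a') = t • f a + (1 - t) • f a')
    (hN : Minimal (IsInvariantCompactConvex f) N) :
    (fun d => (2⁻¹:ℝ) • d + (2⁻¹:ℝ) • f d) '' N = N := by
  obtain ⟨hNne, hNcpt, hNconv, hNinv⟩ := hN.prop
  set g : E → E := fun d => (2⁻¹:ℝ) • d + (2⁻¹:ℝ) • f d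
  have hgN : g '' N ⊆ N := by
    rintro _ ⟨d, hd, rfl⟩
    exact hNconv hd (hNinv hd) (by norm_num) (by norm_num) (by norm_num)
  refine subset_antisymm hgN (hN.2 ⟨hNne.image g, ?_, ?_, ?_⟩ hgN)
  · exact hNcpt.image_of_continuousOn
      ((continuousOn_id.const_smul _).add ((hfc.mono hNK).const_smul _))
  · rintro _ ⟨a, ha, rfl⟩ _ ⟨b, hb, rfl⟩ t u ht hu htu
    obtain rfl : u = 1 - t := by linarith
    refine ⟨t • a + (1 - t) • b, hNconv ha hb ht hu htu, ?_⟩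
    simp only [g]
    rw [haff t ⟨ht, by linarith⟩ a (hNK ha) b (hNK hb)]
    module
  · rintro _ ⟨d, hd, rfl⟩
    refine ⟨f d, hNinv hd, ?_⟩
    have := haff 2⁻¹ (by norm_num) d (hNK hd) (f d) (hNK (hNinv hd))
    rw [show (1 - 2⁻¹ : ℝ) = 2⁻¹ by norm_num] at this
    exact this.symm

theorem exists_isFixedPt_of_affine [T2Space E] [LocallyConvexSpace ℝ E] (hKcpt : IsCompact K)
    (hKconv : Convex ℝ K) (hKne : K.Nonempty) (hfc : ContinuousOn f K) (hmaps : MapsTo f K K)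
    (haff : ∀ t ∈ Icc (0:ℝ) 1, ∀ a ∈ K, ∀ a' ∈ K,
      f (t • a + (1 - t) • a') = t • f a + (1 - t) • f a') :
    ∃ b ∈ K, IsFixedPt f b := by
  obtain ⟨N, hNK, hN⟩ := exists_minimal_isInvariantCompactConvex hKcpt hKconv hKne hmaps
  obtain ⟨hNne, hNcpt, -, hNinv⟩ := hN.prop
  obtain ⟨y, hy⟩ := hNcpt.extremePoints_nonempty hNne
  -- an extreme point `y` of `N` is the midpoint of some `d ∈ N` and `f d`, forcing `d = y = f d`
  obtain ⟨d, hd, hdy⟩ : y ∈ (fun d => (2⁻¹:ℝ) • d + (2⁻¹:ℝ) • f d) '' N :=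
    (image_midpoint_eq_of_minimal hNK hfc haff hN).symm ▸ hy.1
  obtain ⟨rfl, hfd⟩ := (mem_extremePoints.1 hy).2 d hd (f d) (hNinv hd)
    ⟨2⁻¹, 2⁻¹, by norm_num, by norm_num, by norm_num, hdy⟩
  exact ⟨d, hNK hd, hfd⟩

end FixedPoint

section Semigroup

variable {S : Type*} [Semigroup S]

def IsMinimalIdempotent (e : S) : Prop :=
  IsIdempotentElem e ∧ ∀ f : S, IsIdempotentElem f → f * e = f → e * f = f → f = e

namespace IsMinimalIdempotent

variable {e f : S}

theorem mul_eq_left (he : IsMinimalIdempotent e) (hf : IsIdempotentElem f) (hfe : f * e = f) :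
    e * f = e := by
  refine he.2 (e * f) ?_ (by rw [mul_assoc, hfe]) (by rw [← mul_assoc, he.1.eq])
  rw [IsIdempotentElem, mul_assoc, ← mul_assoc f, hfe, hf.eq]

theorem eq_of_idempotent_mul_eq {s : S} (he : IsMinimalIdempotent e) (hse : s * e = s)
    (hes : e * s = s) (hf : IsIdempotentElem f) (hfs : f * s = f) : s = e := by
  have hfe : f * e = f := by rw [← hfs, mul_assoc, hse]
  have hef : e * f = e := he.mul_eq_left hf hfe
  rw [← hes, ← hef, mul_assoc, hfs]

theorem mul_of_mul_mul_eq {x : S} (he : IsMinimalIdempotent e) (hexe : e * x * e = e) :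
    IsMinimalIdempotent (e * x) := by
  refine ⟨by rw [IsIdempotentElem, ← mul_assoc, hexe], fun g hg hgex hexg => ?_⟩
  have heg : e * g = g := by rw [← hexg, ← mul_assoc, ← mul_assoc, he.1.eq]
  have hge : g * e = e := by
    have hge_idem : IsIdempotentElem (g * e) := by
      rw [IsIdempotentElem, mul_assoc, ← mul_assoc e, heg, ← mul_assoc, hg.eq]
    have := he.mul_eq_left hge_idem (by rw [mul_assoc, he.1.eq])
    rwa [← mul_assoc, heg] at this
  rw [← hgex, ← mul_assoc, hge]

end IsMinimalIdempotent

variable [TopologicalSpace S] [T2Space S] [CompactSpace S]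

theorem exists_idempotent_mul_eq_of_mul_eq (hcont : ∀ r : S, Continuous (· * r)) {b s : S}
    (hb : b * s = b) : ∃ f, IsIdempotentElem f ∧ f * s = f := by
  obtain ⟨f, hfs, hf⟩ := exists_idempotent_in_compact_subsemigroup hcont {w | w * s = w} ⟨b, hb⟩
    (isClosed_eq (hcont s) continuous_id).isCompact
    (fun p _ q hq => by simp only [mem_ofPred_eq, mul_assoc, hq.out])
  exact ⟨f, hf, hfs⟩

theorem IsMinimalIdempotent.mul_mul_eq (hcont : ∀ r : S, Continuous (· * r)) {e : S}
    (he : IsMinimalIdempotent e) {a b : S} (hb : b * (e * a * e) = b) : e * a * e = e := by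
  obtain ⟨f, hf, hfs⟩ := exists_idempotent_mul_eq_of_mul_eq hcont hb
  exact he.eq_of_idempotent_mul_eq (by rw [mul_assoc, he.1.eq])
    (by rw [← mul_assoc, ← mul_assoc, he.1.eq]) hf hfs

end Semigroup

/-- In a compact convex semigroup, if `e` is a minimal idempotent and `x ∈ K`, then `e·x`
is again a minimal idempotent of `K`. -/
theorem compact_convex_semigroup_minimal_idempotent_mul
    {E : Type*} [AddCommGroup E] [Module ℝ E] [TopologicalSpace E]
    [IsTopologicalAddGroup E] [ContinuousSMul ℝ E] [T2Space E] [LocallyConvexSpace ℝ E]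
    (K : Set E) (hKcpt : IsCompact K) (hKconv : Convex ℝ K) (hKne : K.Nonempty)
    (mul : E → E → E)
    (hmem : ∀ a ∈ K, ∀ b ∈ K, mul a b ∈ K)
    (hassoc : ∀ a ∈ K, ∀ b ∈ K, ∀ c ∈ K, mul (mul a b) c = mul a (mul b c))
    (hcont : ∀ b ∈ K, ContinuousOn (fun a => mul a b) K)
    (haffine : ∀ t ∈ Set.Icc (0:ℝ) 1, ∀ a ∈ K, ∀ a' ∈ K, ∀ b ∈ K,
      mul (t • a + (1 - t) • a') b = t • mul a b + (1 - t) • mul a' b)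
    (e : E) (heK : e ∈ K) (he : mul e e = e)
    (hemin : ∀ g ∈ K, mul g g = g → mul g e = g → mul e g = g → g = e)
    (x : E) (hxK : x ∈ K) :
    mul e x ∈ K ∧ mul (mul e x) (mul e x) = mul e x ∧
      ∀ g ∈ K, mul g g = g → mul g (mul e x) = g → mul (mul e x) g = g → g = mul e x := by
  let : Semigroup K :=
    { mul := fun p q => ⟨mul p q, hmem _ p.2 _ q.2⟩
      mul_assoc := fun p q r => Subtype.ext (hassoc _ p.2 _ q.2 _ r.2) }
  have : CompactSpace K := isCompact_iff_compactSpace.mp hKcpt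
  have hcontK : ∀ r : K, Continuous (· * r) := fun r => (hcont r r.2).domRestrict.subtype_mk _
  have hfix (s : K) : ∃ b : K, b * s = b := by
    obtain ⟨b, hbK, hb⟩ := exists_isFixedPt_of_affine hKcpt hKconv hKne (hcont s s.2)
      (fun d hd => hmem d hd s s.2) (fun t ht a ha a' ha' => haffine t ht a ha a' ha' s s.2)
    exact ⟨⟨b, hbK⟩, Subtype.ext hb⟩
  have heK' : IsMinimalIdempotent (⟨e, heK⟩ : K) := ⟨Subtype.ext he, fun g hg hge heg =>
    Subtype.ext (hemin g g.2 (congrArg Subtype.val hg.eq) (congrArg Subtype.val hge)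
      (congrArg Subtype.val heg))⟩
  obtain ⟨b, hb⟩ := hfix (⟨e, heK⟩ * ⟨x, hxK⟩ * ⟨e, heK⟩)
  have hex := heK'.mul_of_mul_mul_eq (heK'.mul_mul_eq hcontK hb)
  exact ⟨hmem _ heK _ hxK, congrArg Subtype.val hex.1.eq, fun g hgK hgg hgex hexg =>
    congrArg Subtype.val (hex.2 ⟨g, hgK⟩ (Subtype.ext hgg) (Subtype.ext hgex) (Subtype.ext hexg))⟩
end

section
/- Let A be a unital C*-algebra and let Φ : A → A be a unital positive linear map satisfying the Schwarz inequality Φ(x)*Φ(x) ≤ Φ(x*x) for all x ∈ A. Suppose Φ is idempotent (Φ ∘ Φ = Φ) and faithful (Φ(x*x) = 0 implies x = 0). Then the range of Φ is a unital *-subalgebra of A: it is a linear subspace containing 1, closed under the adjoint operation, and closed under multiplication. -/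
/-!
The range of the idempotent `Φ` is its set of fixed points. For a fixed point `x`, the Schwarz
inequality makes `d = Φ (star x * x) - star x * x` positive, while idempotence gives `Φ d = 0`;
faithfulness forces `d = 0`, so `star x * x` is fixed again. Polarization upgrades this to
`star x * y` for fixed `x, y`, and closure under `star` holds because positive maps on a
C*-algebra preserve adjoints.
-/

open ComplexStarModule

section Polarization

variable {A : Type*} [Ring A] [StarRing A] [Module ℂ A] [StarModule ℂ A]
  [IsScalarTower ℂ A A] [SMulCommClass ℂ A A]

lemma star_mul_eq_polarization (x y : A) :
    star x * y = (4⁻¹ : ℂ) • (star (y + x) * (y + x)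
      + Complex.I • (star (y + Complex.I • x) * (y + Complex.I • x))
      - star (y - x) * (y - x)
      - Complex.I • (star (y - Complex.I • x) * (y - Complex.I • x))) := by
  simp only [star_add, star_sub, star_smul, Complex.star_def, Complex.conj_I,
    mul_add, add_mul, mul_sub, sub_mul, smul_add, smul_sub, smul_smul, neg_smul,
    neg_mul, smul_mul_assoc, mul_smul_comm]
  match_scalars
  all_goals ring_nf <;> norm_num

lemma Submodule.star_mul_mem_of_forall_star_mul_self_mem {S : Submodule ℂ A}
    (hS : ∀ z ∈ S, star z * z ∈ S) {x y : A} (hx : x ∈ S) (hy : y ∈ S) :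
    star x * y ∈ S := by
  rw [star_mul_eq_polarization]
  have hI : Complex.I • x ∈ S := S.smul_mem _ hx
  refine S.smul_mem _ (S.sub_mem (S.sub_mem (S.add_mem ?_ (S.smul_mem _ ?_)) ?_)
    (S.smul_mem _ ?_)) <;> apply hS
  exacts [S.add_mem hy hx, S.add_mem hy hI, S.sub_mem hy hx, S.sub_mem hy hI]

end Polarization

lemma LinearMap.map_star_of_forall_isSelfAdjoint {A B : Type*}
    [AddCommGroup A] [Module ℂ A] [StarAddMonoid A] [StarModule ℂ A]
    [AddCommGroup B] [Module ℂ B] [StarAddMonoid B] [StarModule ℂ B]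
    (Φ : A →ₗ[ℂ] B) (hΦ : ∀ a, IsSelfAdjoint a → IsSelfAdjoint (Φ a)) (a : A) :
    Φ (star a) = star (Φ a) := by
  have hre := hΦ _ (ℜ a).2
  have him := hΦ _ (ℑ a).2
  conv_lhs => rw [← realPart_add_I_smul_imaginaryPart a]
  conv_rhs => rw [← realPart_add_I_smul_imaginaryPart a]
  simp only [star_add, star_smul, map_add, map_smul, (ℜ a).2.star_eq, (ℑ a).2.star_eq,
    hre.star_eq, him.star_eq]

lemma LinearMap.map_star_of_map_nonneg {A B : Type*}
    [NonUnitalCStarAlgebra A] [PartialOrder A] [StarOrderedRing A]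
    [NonUnitalRing B] [StarRing B] [PartialOrder B] [StarOrderedRing B]
    [Module ℂ B] [StarModule ℂ B]
    (Φ : A →ₗ[ℂ] B) (hpos : ∀ a, 0 ≤ a → 0 ≤ Φ a) (a : A) :
    Φ (star a) = star (Φ a) :=
  Φ.map_star_of_forall_isSelfAdjoint (fun _ ha ↦ ha.map' (PositiveLinearMap.mk₀ Φ hpos)) a

lemma eq_zero_of_nonneg_of_map_eq_zero {A B : Type*} [NonUnitalCStarAlgebra A] [PartialOrder A]
    [StarOrderedRing A] [Zero B] {Φ : A → B} (hfaithful : ∀ x, Φ (star x * x) = 0 → x = 0)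
    {d : A} (hd : 0 ≤ d) (hΦd : Φ d = 0) : d = 0 := by
  obtain ⟨b, rfl⟩ := CStarAlgebra.nonneg_iff_eq_star_mul_self.mp hd
  simp [hfaithful b hΦd]

lemma LinearMap.map_star_mul_self_of_map_eq_self {A : Type*} [NonUnitalCStarAlgebra A]
    [PartialOrder A] [StarOrderedRing A] {Φ : A →ₗ[ℂ] A}
    (hschwarz : ∀ x, star (Φ x) * Φ x ≤ Φ (star x * x)) (hidem : ∀ x, Φ (Φ x) = Φ x)
    (hfaithful : ∀ x, Φ (star x * x) = 0 → x = 0) {x : A} (hx : Φ x = x) :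
    Φ (star x * x) = star x * x := by
  have hd : 0 ≤ Φ (star x * x) - star x * x := by
    simpa [hx] using hschwarz x
  have hΦd : Φ (Φ (star x * x) - star x * x) = 0 := by rw [map_sub, hidem, sub_self]
  exact sub_eq_zero.mp (eq_zero_of_nonneg_of_map_eq_zero hfaithful hd hΦd)

/-- If `Φ` is a unital positive linear map on a unital C*-algebra satisfying the Schwarz
inequality which is idempotent and faithful, then the range of `Φ` is a unital
*-subalgebra of `A`: a linear subspace containing `1`, closed under adjoints and under
multiplication. -/
theorem range_of_faithful_idempotent_schwarz_map_is_star_subalgebra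
    {A : Type*} [NormedRing A] [StarRing A] [CStarRing A]
    [NormedAlgebra ℂ A] [CompleteSpace A] [StarModule ℂ A]
    [PartialOrder A] [StarOrderedRing A]
    (Φ : A →ₗ[ℂ] A)
    (hunital : Φ 1 = 1)
    (hpos : ∀ a : A, 0 ≤ a → 0 ≤ Φ a)
    (hschwarz : ∀ x : A, star (Φ x) * Φ x ≤ Φ (star x * x))
    (hidem : ∀ x : A, Φ (Φ x) = Φ x)
    (hfaithful : ∀ x : A, Φ (star x * x) = 0 → x = 0) :
    (1 : A) ∈ Set.range Φ ∧
    (∀ x ∈ Set.range Φ, ∀ y ∈ Set.range Φ, x + y ∈ Set.range Φ) ∧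
    (∀ (c : ℂ), ∀ x ∈ Set.range Φ, c • x ∈ Set.range Φ) ∧
    (∀ x ∈ Set.range Φ, star x ∈ Set.range Φ) ∧
    (∀ x ∈ Set.range Φ, ∀ y ∈ Set.range Φ, x * y ∈ Set.range Φ) := by
  let _ : CStarAlgebra A := ⟨⟩
  have hstar_mem : ∀ x ∈ LinearMap.range Φ, star x ∈ LinearMap.range Φ := by
    rintro _ ⟨a, rfl⟩
    exact ⟨star a, Φ.map_star_of_map_nonneg hpos a⟩
  have hstar_mul_self_mem : ∀ z ∈ LinearMap.range Φ, star z * z ∈ LinearMap.range Φ := by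
    rintro _ ⟨a, rfl⟩
    exact ⟨_, Φ.map_star_mul_self_of_map_eq_self hschwarz hidem hfaithful (hidem a)⟩
  refine ⟨⟨1, hunital⟩, fun x hx y hy ↦ (LinearMap.range Φ).add_mem hx hy,
    fun c x hx ↦ (LinearMap.range Φ).smul_mem c hx, hstar_mem, fun x hx y hy ↦ ?_⟩
  simpa using (LinearMap.range Φ).star_mul_mem_of_forall_star_mul_self_mem hstar_mul_self_mem
    (hstar_mem x hx) hy
end
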